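/- Let λ1, λ2, f > 0, 0 < θ0 < π/2, h > 0, q = 2πn₀/h for a fixed positive integer n₀, and suppose d + 2λ2q⁴cos⁴θ0 < 0. Define F₂(δρ) = ∫₀^h [ (d/2)δρ² + (f/4)δρ⁴ + λ1(δρ'' + q²δρ)² + λ2(q²δρ·cos²θ0)² ] dz. Then for δρ_ε(z) = ε sin(qz) one has F₂(δρ_ε) = (d + 2λ2q⁴cos⁴θ0)ε²h/4 + 3fε⁴h/32, which is strictly negative for every 0 < ε < √(−8(d + 2λ2q⁴cos⁴θ0)/(3f)). Consequently F₂ takes values strictly below F₂(0) = 0, so any global minimizer δρ* of F₂ over the h-periodic W^{2,2} functions is not identically zero; in particular the helical smectic state (θ ≡ 0, δρ* ≢ 0) exists as a weak solution of the Euler–Lagrange equations of the 1D reduced energy. -/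

import Mathlib

noncomputable section

open MeasureTheory Filter Topology

/-- The 1D reduced energy `F(θ, δρ)` on `[0, h]`:
`∫₀ʰ [k₁θ_z² − k₂²σ²cos²θ/(k₂cos²θ + k₃sin²θ) + (d/2)δρ² + (f/4)δρ⁴
  + λ₁(δρ_zz + q²δρ)² + λ₂(sin²θ·δρ_zz + q²δρcos²θ₀)²] dz`. -/
def F1D (k1 k2 k3 σ d f lam1 lam2 q θ0 h : ℝ) (th ρ : ℝ → ℝ) : ℝ :=
  ∫ z in (0:ℝ)..h,
    (k1 * (deriv th z) ^ 2
      - k2 ^ 2 * σ ^ 2 * Real.cos (th z) ^ 2 /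
          (k2 * Real.cos (th z) ^ 2 + k3 * Real.sin (th z) ^ 2)
      + d / 2 * ρ z ^ 2 + f / 4 * ρ z ^ 4
      + lam1 * (deriv (deriv ρ) z + q ^ 2 * ρ z) ^ 2
      + lam2 * (Real.sin (th z) ^ 2 * deriv (deriv ρ) z
          + q ^ 2 * ρ z * Real.cos θ0 ^ 2) ^ 2)

/-- Membership in `W^{1,2}(0,h)` (encoded via pointwise derivatives). -/
def MemW12I (h : ℝ) (g : ℝ → ℝ) : Prop :=
  MemLp g 2 (volume.restrict (Set.Ioo 0 h)) ∧
    MemLp (deriv g) 2 (volume.restrict (Set.Ioo 0 h))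

/-- `h`-periodic membership in `W^{2,2}`: `g(0) = g(h)`, `g'(0) = g'(h)`,
`g''(0) = g''(h)`, with `g, g', g'' ∈ L²(0,h)`. -/
def PerW22 (h : ℝ) (g : ℝ → ℝ) : Prop :=
  MemLp g 2 (volume.restrict (Set.Ioo 0 h)) ∧
    MemLp (deriv g) 2 (volume.restrict (Set.Ioo 0 h)) ∧
    MemLp (deriv (deriv g)) 2 (volume.restrict (Set.Ioo 0 h)) ∧
    g 0 = g h ∧ deriv g 0 = deriv g h ∧ deriv (deriv g) 0 = deriv (deriv g) h

/-- The restriction `F₂` of the 1D reduced energy to `θ ≡ 0`: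
`F₂(δρ) = ∫₀ʰ [(d/2)δρ² + (f/4)δρ⁴ + λ₁(δρ'' + q²δρ)² + λ₂(q²δρcos²θ₀)²] dz`. -/
def F2fun (d f lam1 lam2 q θ0 h : ℝ) (ρ : ℝ → ℝ) : ℝ :=
  ∫ z in (0:ℝ)..h,
    (d / 2 * ρ z ^ 2 + f / 4 * ρ z ^ 4
      + lam1 * (deriv (deriv ρ) z + q ^ 2 * ρ z) ^ 2
      + lam2 * (q ^ 2 * ρ z * Real.cos θ0 ^ 2) ^ 2)

/-! The energy of `δρ_ε = ε sin (q z)` is `A ε² h / 4 + 3 f ε⁴ h / 32` with `A < 0`, hence negative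
for small `ε`. As `q h ∈ 2πℤ`, `δρ_ε` is admissible, so it undercuts any minimizer vanishing
on `[0, h]`, whose energy would be `0`. -/

open Real Set

lemma deriv_const_mul_sin_mul (a q : ℝ) :
    deriv (fun z => a * sin (q * z)) = fun z => a * q * cos (q * z) := by
  funext z
  exact (((hasDerivAt_id' z).const_mul q).sin.const_mul a).deriv.trans (by ring)

lemma deriv_deriv_const_mul_sin_mul (a q : ℝ) :
    deriv (deriv (fun z => a * sin (q * z))) = fun z => -(a * q ^ 2) * sin (q * z) := by
  rw [deriv_const_mul_sin_mul]
  funext z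
  exact (((hasDerivAt_id' z).const_mul q).cos.const_mul (a * q)).deriv.trans (by ring)

lemma integral_sin_mul_sq_of_sin_eq_zero {q h : ℝ} (hq : q ≠ 0) (hs : sin (q * h) = 0) :
    ∫ z in (0 : ℝ)..h, sin (q * z) ^ 2 = h / 2 := by
  rw [intervalIntegral.integral_comp_mul_left (fun u => sin u ^ 2) hq, integral_sin_sq]
  simp only [mul_zero, sin_zero, cos_zero, mul_one, hs, zero_mul, sub_self, zero_add, sub_zero,
    smul_eq_mul]
  field_simp

lemma integral_sin_mul_pow_four_of_sin_eq_zero {q h : ℝ} (hq : q ≠ 0) (hs : sin (q * h) = 0) :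
    ∫ z in (0 : ℝ)..h, sin (q * z) ^ 4 = 3 * h / 8 := by
  rw [intervalIntegral.integral_comp_mul_left (fun u => sin u ^ 4) hq,
    integral_sin_pow 2, integral_sin_sq]
  simp only [mul_zero, sin_zero, cos_zero, mul_one, hs, zero_mul, sub_self, Nat.cast_ofNat,
    zero_add, sub_zero, smul_eq_mul]
  field_simp
  ring

/-- On a sinusoid of wave number `q` the `λ₁` term vanishes, since `(sin (q·))'' + q² sin (q·) = 0`. -/
lemma F2fun_const_mul_sin {d f lam1 lam2 q θ0 h : ℝ} (hq : q ≠ 0) (hs : sin (q * h) = 0)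
    (ε : ℝ) :
    F2fun d f lam1 lam2 q θ0 h (fun z => ε * sin (q * z)) =
      (d + 2 * lam2 * q ^ 4 * cos θ0 ^ 4) * ε ^ 2 * h / 4 + 3 * f * ε ^ 4 * h / 32 := by
  have hpointwise : ∀ z, d / 2 * (ε * sin (q * z)) ^ 2 + f / 4 * (ε * sin (q * z)) ^ 4
      + lam1 * (deriv (deriv (fun z => ε * sin (q * z))) z + q ^ 2 * (ε * sin (q * z))) ^ 2
      + lam2 * (q ^ 2 * (ε * sin (q * z)) * cos θ0 ^ 2) ^ 2
      = (d / 2 + lam2 * q ^ 4 * cos θ0 ^ 4) * ε ^ 2 * sin (q * z) ^ 2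
        + f / 4 * ε ^ 4 * sin (q * z) ^ 4 := by
    intro z
    rw [deriv_deriv_const_mul_sin_mul]
    ring
  have hcont : ∀ n : ℕ, IntervalIntegrable (fun z => sin (q * z) ^ n) volume 0 h :=
    fun n => (by fun_prop : Continuous fun z => sin (q * z) ^ n).intervalIntegrable _ _
  simp only [F2fun, hpointwise]
  rw [intervalIntegral.integral_add ((hcont 2).const_mul _) ((hcont 4).const_mul _),
    intervalIntegral.integral_const_mul, intervalIntegral.integral_const_mul,
    integral_sin_mul_sq_of_sin_eq_zero hq hs, integral_sin_mul_pow_four_of_sin_eq_zero hq hs]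
  ring

lemma F2fun_of_eqOn_zero {d f lam1 lam2 q θ0 h : ℝ} (hh : 0 ≤ h) {ρ : ℝ → ℝ}
    (hρ : EqOn ρ 0 (Ioo 0 h)) : F2fun d f lam1 lam2 q θ0 h ρ = 0 := by
  have hρ'' : EqOn (deriv (deriv ρ)) 0 (Ioo 0 h) := by
    simpa using (hρ.deriv isOpen_Ioo).deriv isOpen_Ioo
  rw [F2fun, intervalIntegral.integral_of_le hh, integral_Ioc_eq_integral_Ioo,
    setIntegral_congr_fun measurableSet_Ioo (g := fun _ => 0)
      fun z hz => by simp [hρ hz, hρ'' hz]]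
  simp

lemma perW22_const_mul_sin {q h : ℝ} (hs : sin (q * h) = 0) (hc : cos (q * h) = 1) (a : ℝ) :
    PerW22 h (fun z => a * sin (q * z)) := by
  have hmem : ∀ (b : ℝ) {g : ℝ → ℝ}, Continuous g → (∀ x, |g x| ≤ 1) →
      MemLp (fun x => b * g x) 2 (volume.restrict (Ioo 0 h)) := fun b g hg hg1 =>
    MemLp.of_bound (by fun_prop) |b| (.of_forall fun x => by
      simpa [abs_mul] using mul_le_mul_of_nonneg_left (hg1 x) (abs_nonneg b))
  refine ⟨?_, ?_, ?_, by simp [hs], ?_, ?_⟩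
  · exact hmem a (by fun_prop) fun _ => abs_sin_le_one _
  · rw [deriv_const_mul_sin_mul]
    exact hmem (a * q) (by fun_prop) fun _ => abs_cos_le_one _
  · rw [deriv_deriv_const_mul_sin_mul]
    exact hmem (-(a * q ^ 2)) (by fun_prop) fun _ => abs_sin_le_one _
  · rw [deriv_const_mul_sin_mul]
    simp [hc]
  · rw [deriv_deriv_const_mul_sin_mul]
    simp [hs]

lemma quadratic_add_quartic_neg {A f h ε : ℝ} (hf : 0 < f) (hh : 0 < h) (hε : 0 < ε)
    (hεlt : ε < √(-(8 * A) / (3 * f))) :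
    A * ε ^ 2 * h / 4 + 3 * f * ε ^ 4 * h / 32 < 0 := by
  have hε2 : 3 * f * ε ^ 2 < -(8 * A) := by
    rw [← lt_div_iff₀' (by positivity)]
    exact (lt_sqrt hε.le).mp hεlt
  have hfactor : A * ε ^ 2 * h / 4 + 3 * f * ε ^ 4 * h / 32
      = ε ^ 2 * h / 32 * (8 * A + 3 * f * ε ^ 2) := by ring
  rw [hfactor]
  exact mul_neg_of_pos_of_neg (by positivity) (by linarith)

theorem stmt_16_general (d f lam1 lam2 q θ0 h : ℝ) (n0 : ℕ)
    (hf : 0 < f)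
    (hh : 0 < h) (hn0 : 0 < n0) (hq : q = 2 * Real.pi * n0 / h)
    (hneg : d + 2 * lam2 * q ^ 4 * Real.cos θ0 ^ 4 < 0) :
    -- the value of `F₂` at `δρ_ε(z) = ε sin(qz)`:
    (∀ ε : ℝ, F2fun d f lam1 lam2 q θ0 h (fun z => ε * Real.sin (q * z)) =
      (d + 2 * lam2 * q ^ 4 * Real.cos θ0 ^ 4) * ε ^ 2 * h / 4 + 3 * f * ε ^ 4 * h / 32) ∧
    -- strict negativity for small `ε > 0`:
    (∀ ε : ℝ, 0 < ε →
      ε < Real.sqrt (-(8 * (d + 2 * lam2 * q ^ 4 * Real.cos θ0 ^ 4)) / (3 * f)) →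
      F2fun d f lam1 lam2 q θ0 h (fun z => ε * Real.sin (q * z)) < 0) ∧
    -- any global minimizer over the `h`-periodic `W^{2,2}` class is not identically zero:
    (∀ ρstar : ℝ → ℝ, PerW22 h ρstar →
      (∀ ρ : ℝ → ℝ, PerW22 h ρ → F2fun d f lam1 lam2 q θ0 h ρstar ≤
        F2fun d f lam1 lam2 q θ0 h ρ) →
      ¬ Set.EqOn ρstar 0 (Set.Icc 0 h)) := by
  have hqh : q * h = n0 * (2 * π) := by
    rw [hq]
    field_simp
  have hq0 : q ≠ 0 := by
    rw [hq]
    positivity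
  have hs : sin (q * h) = 0 := by
    rw [hqh, ← mul_assoc, mul_comm _ (2 : ℝ)]
    exact_mod_cast sin_nat_mul_pi (2 * n0)
  have hc : cos (q * h) = 1 := by rw [hqh, cos_nat_mul_two_pi]
  have hval := F2fun_const_mul_sin (d := d) (f := f) (lam1 := lam1) (lam2 := lam2)
    (θ0 := θ0) hq0 hs
  have hsmall : ∀ ε : ℝ, 0 < ε →
      ε < √(-(8 * (d + 2 * lam2 * q ^ 4 * cos θ0 ^ 4)) / (3 * f)) →
      F2fun d f lam1 lam2 q θ0 h (fun z => ε * sin (q * z)) < 0 :=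
    fun ε hε hεlt => (hval ε).trans_lt (quadratic_add_quartic_neg hf hh hε hεlt)
  refine ⟨hval, hsmall, fun ρstar _ hmin hzero => ?_⟩
  set r := √(-(8 * (d + 2 * lam2 * q ^ 4 * cos θ0 ^ 4)) / (3 * f))
  have hr : 0 < r := sqrt_pos.mpr (div_pos (by linarith) (by positivity))
  have hbelow := (hmin _ (perW22_const_mul_sin hs hc (r / 2))).trans_lt
    (hsmall (r / 2) (half_pos hr) (half_lt_self hr))
  rw [F2fun_of_eqOn_zero hh.le (hzero.mono Ioo_subset_Icc_self)] at hbelow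
  exact lt_irrefl _ hbelow

/-- Let `λ₁, λ₂, f > 0`, `0 < θ₀ < π/2`, `h > 0`, `q = 2πn₀/h`, and
`d + 2λ₂q⁴cos⁴θ₀ < 0`.  Then `F₂(ε sin(q·)) = (d + 2λ₂q⁴cos⁴θ₀)ε²h/4 + 3fε⁴h/32`, which
is strictly negative for `0 < ε < √(−8(d + 2λ₂q⁴cos⁴θ₀)/(3f))`; consequently `F₂` takes
values strictly below `F₂(0) = 0`, so any global minimizer of `F₂` over the `h`-periodic
`W^{2,2}` functions is not identically zero (the helical smectic state `(θ ≡ 0, δρ ≢ 0)`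
exists). -/
theorem stmt_16 (d f lam1 lam2 q θ0 h : ℝ) (n0 : ℕ)
    (hl1 : 0 < lam1) (hl2 : 0 < lam2) (hf : 0 < f)
    (hθ0 : 0 < θ0) (hθ0' : θ0 < Real.pi / 2)
    (hh : 0 < h) (hn0 : 0 < n0) (hq : q = 2 * Real.pi * n0 / h)
    (hneg : d + 2 * lam2 * q ^ 4 * Real.cos θ0 ^ 4 < 0) :
    -- the value of `F₂` at `δρ_ε(z) = ε sin(qz)`:
    (∀ ε : ℝ, F2fun d f lam1 lam2 q θ0 h (fun z => ε * Real.sin (q * z)) =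
      (d + 2 * lam2 * q ^ 4 * Real.cos θ0 ^ 4) * ε ^ 2 * h / 4 + 3 * f * ε ^ 4 * h / 32) ∧
    -- strict negativity for small `ε > 0`:
    (∀ ε : ℝ, 0 < ε →
      ε < Real.sqrt (-(8 * (d + 2 * lam2 * q ^ 4 * Real.cos θ0 ^ 4)) / (3 * f)) →
      F2fun d f lam1 lam2 q θ0 h (fun z => ε * Real.sin (q * z)) < 0) ∧
    -- any global minimizer over the `h`-periodic `W^{2,2}` class is not identically zero:
    (∀ ρstar : ℝ → ℝ, PerW22 h ρstar →
      (∀ ρ : ℝ → ℝ, PerW22 h ρ → F2fun d f lam1 lam2 q θ0 h ρstar ≤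
        F2fun d f lam1 lam2 q θ0 h ρ) →
      ¬ Set.EqOn ρstar 0 (Set.Icc 0 h)) :=
  stmt_16_general d f lam1 lam2 q θ0 h n0 hf hh hn0 hq hneg
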